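/- Let d ≥ 3, let 1 ≤ p ≤ 8/7, and let f ∈ L^p(ℝ^d). Set h := f ∗ f̃, where f̃(x) = \overline{f(−x)}, so that ĥ = |f̂|². Let χ be a nonnegative Schwartz function on ℝ^d with χ(y) ≥ 1 for |y| ≤ 1. Then for every ω ∈ S^{d-1} one has the pointwise bound 𝓜⁺f(ω) ≤ C (𝓜h(ω))^{1/2}, where 𝓜⁺f(ω) := sup_{ε>0} ε^{-d} ∫_{|y|≤ε} |f̂(ω + y)| dy, 𝓜h(ω) := sup_{ε>0} |∫_{ℝ^d} ĥ(ω + y) χ_ε(y) dy|, and C depends only on d. -/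

import Mathlib

/-!
Cauchy–Schwarz bounds the average of `|f̂|` over the ball `B(ω, ε)` by `|B₁|^{1/2}` times the
square root of the average of `|f̂|²` over that ball. Since `χ ≥ 1` on the unit ball,
`χ_ε ≥ ε^{-d}` on the `ε`-ball, so this average is dominated by `∫ |f̂(ω + y)|² χ_ε(y) dy`, which
is one of the quantities in the supremum defining `𝓜h(ω)`; hence `C = |B₁|^{1/2}` works. The
integrand is integrable (so its Bochner integral is not the junk value `0`) by Hölder, since
`|f̂|² ∈ L^{p'/2}` with `p'/2 ≥ 1` (as `p ≤ 2`) and `χ_ε` is a Schwartz function.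
-/

open MeasureTheory Metric Filter Complex
open scoped FourierTransform RealInnerProductSpace ENNReal NNReal SchwartzMap

noncomputable section

/-- The positive maximal Fourier restriction operator
`𝓜⁺f(ω) = sup_{ε>0} ε^{-d} ∫_{|y|≤ε} |f̂(ω+y)| dy`, applied to `F = f̂`. -/
def posMaxRestrict {d : ℕ} (F : EuclideanSpace ℝ (Fin d) → ℂ)
    (ω : sphere (0 : EuclideanSpace ℝ (Fin d)) 1) : ℝ≥0∞ :=
  ⨆ (ε : ℝ) (_ : 0 < ε),
    (∫⁻ y in closedBall (0 : EuclideanSpace ℝ (Fin d)) ε, ‖F (↑ω + y)‖₊) /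
      ENNReal.ofReal (ε ^ d)

/-- The maximal Fourier restriction operator `𝓜h(ω) = sup_{ε>0} |∫ ĥ(ω+y) χ_ε(y) dy|`
applied to `ĥ = |f̂|² = |F|²`, with `χ` a real-valued Schwartz function. -/
def maxRestrictSq {d : ℕ} (χ : 𝓢(EuclideanSpace ℝ (Fin d), ℝ))
    (F : EuclideanSpace ℝ (Fin d) → ℂ)
    (ω : sphere (0 : EuclideanSpace ℝ (Fin d)) 1) : ℝ≥0∞ :=
  ⨆ (ε : ℝ) (_ : 0 < ε),
    (‖∫ y, ‖F (↑ω + y)‖ ^ 2 * ((ε ^ d)⁻¹ * χ (ε⁻¹ • y))‖₊ : ℝ≥0∞)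

theorem setLIntegral_le_sqrt_setLIntegral_sq_mul_sqrt_measure {α : Type*} [MeasurableSpace α]
    (μ : Measure α) (s : Set α) {g : α → ℝ≥0∞} (hg : AEMeasurable g (μ.restrict s)) :
    ∫⁻ x in s, g x ∂μ ≤ (∫⁻ x in s, g x ^ 2 ∂μ) ^ (1 / 2 : ℝ) * μ s ^ (1 / 2 : ℝ) := by
  simpa [ENNReal.rpow_two] using
    ENNReal.lintegral_mul_le_Lp_mul_Lq (μ.restrict s) .two_two hg aemeasurable_const (g := 1)

theorem ENNReal.two_le_inv_one_sub_inv {p : ℝ≥0∞} (hp : p ≤ 2) : 2 ≤ (1 - p⁻¹)⁻¹ := by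
  rw [ENNReal.le_inv_iff_le_inv, tsub_le_iff_right]
  calc (1 : ℝ≥0∞) = 2⁻¹ + 2⁻¹ := ENNReal.inv_two_add_inv_two.symm
    _ ≤ 2⁻¹ + p⁻¹ := by gcongr

section

variable {E : Type*} [NormedAddCommGroup E] [NormedSpace ℝ E] [MeasurableSpace E]

theorem setLIntegral_closedBall_le_lintegral_mul_rescale [OpensMeasurableSpace E] (μ : Measure E)
    {χ : E → ℝ} (hχ : ∀ y, ‖y‖ ≤ 1 → 1 ≤ χ y) (n : ℕ) {ε : ℝ} (hε : 0 < ε) (g : E → ℝ≥0∞) :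
    ∫⁻ y in closedBall 0 ε, g y ∂μ ≤
      ENNReal.ofReal (ε ^ n) * ∫⁻ y, g y * ENNReal.ofReal ((ε ^ n)⁻¹ * χ (ε⁻¹ • y)) ∂μ := by
  rw [← lintegral_const_mul' _ _ ENNReal.ofReal_ne_top,
    ← lintegral_indicator measurableSet_closedBall]
  refine lintegral_mono fun y => ?_
  by_cases hy : y ∈ closedBall (0 : E) ε
  · have hχy : 1 ≤ χ (ε⁻¹ • y) := hχ _ <| by
      rw [norm_smul, Real.norm_eq_abs, abs_of_pos (inv_pos.2 hε)]
      exact inv_mul_le_one_of_le₀ (mem_closedBall_zero_iff.1 hy) hε.le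
    have hεn : (0 : ℝ) < ε ^ n := by positivity
    rw [Set.indicator_of_mem hy, mul_left_comm, ← ENNReal.ofReal_mul hεn.le,
      mul_inv_cancel_left₀ hεn.ne']
    exact le_mul_of_one_le_right' (ENNReal.one_le_ofReal.2 hχy)
  · simp [hy]

theorem setLIntegral_closedBall_div_le_sqrt_lintegral_sq_mul_rescale [BorelSpace E]
    [FiniteDimensional ℝ E] (μ : Measure E) [μ.IsAddHaarMeasure] {χ : E → ℝ}
    (hχ : ∀ y, ‖y‖ ≤ 1 → 1 ≤ χ y) {ε : ℝ} (hε : 0 < ε) {g : E → ℝ≥0∞} (hg : AEMeasurable g μ) :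
    (∫⁻ y in closedBall 0 ε, g y ∂μ) / ENNReal.ofReal (ε ^ Module.finrank ℝ E) ≤
      μ (ball 0 1) ^ (1 / 2 : ℝ) * (∫⁻ y, g y ^ 2 *
        ENNReal.ofReal ((ε ^ Module.finrank ℝ E)⁻¹ * χ (ε⁻¹ • y)) ∂μ) ^ (1 / 2 : ℝ) := by
  set c := ENNReal.ofReal (ε ^ Module.finrank ℝ E)
  have hc : c ≠ 0 := by positivity
  have hsqrt : c ^ (1 / 2 : ℝ) * c ^ (1 / 2 : ℝ) = c := by
    rw [← ENNReal.rpow_add _ _ hc ENNReal.ofReal_ne_top]; norm_num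
  rw [ENNReal.div_le_iff hc ENNReal.ofReal_ne_top]
  calc ∫⁻ y in closedBall 0 ε, g y ∂μ
      ≤ (∫⁻ y in closedBall 0 ε, g y ^ 2 ∂μ) ^ (1 / 2 : ℝ) * μ (closedBall 0 ε) ^ (1 / 2 : ℝ) :=
        setLIntegral_le_sqrt_setLIntegral_sq_mul_sqrt_measure μ _ hg.restrict
    _ ≤ (c * ∫⁻ y, g y ^ 2 * ENNReal.ofReal ((ε ^ Module.finrank ℝ E)⁻¹ * χ (ε⁻¹ • y)) ∂μ)
          ^ (1 / 2 : ℝ) * (c * μ (ball 0 1)) ^ (1 / 2 : ℝ) := by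
        rw [μ.addHaar_closedBall _ hε.le]
        gcongr
        exact setLIntegral_closedBall_le_lintegral_mul_rescale μ hχ _ hε _
    _ = _ := by
        rw [ENNReal.mul_rpow_of_nonneg _ _ (by norm_num),
          ENNReal.mul_rpow_of_nonneg _ _ (by norm_num), mul_mul_mul_comm, hsqrt]
        ring

variable [BorelSpace E] {V : Type*} [NormedAddCommGroup V] {μ : Measure E}
  [μ.HasTemperateGrowth] {s : ℝ≥0∞} {G : E → V}

theorem MeasureTheory.MemLp.integrable_norm_sq_mul_schwartz (hG : MemLp G s μ) (hs : 2 ≤ s)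
    (ψ : 𝓢(E, ℝ)) :
    Integrable (fun y => ‖G y‖ ^ 2 * ψ y) μ := by
  have hG2 : MemLp (fun y => ‖G y‖ ^ 2) (s / 2) μ := by
    simpa using hG.norm_rpow_div 2
  have hs2 : (s / 2)⁻¹ ≤ 1 := ENNReal.inv_le_one.2 <| by
    rwa [ENNReal.le_div_iff_mul_le (by norm_num) (by norm_num), one_mul]
  have : ENNReal.HolderConjugate (s / 2) (1 - (s / 2)⁻¹)⁻¹ :=
    ENNReal.holderConjugate_iff.2 <| by rw [inv_inv, add_tsub_cancel_of_le hs2]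
  exact hG2.integrable_mul (ψ.memLp (1 - (s / 2)⁻¹)⁻¹ μ)

theorem ofReal_integral_norm_sq_mul_rescale (hG : MemLp G s μ) (hs : 2 ≤ s) {χ : 𝓢(E, ℝ)}
    (hχ : ∀ y, 0 ≤ χ y) (n : ℕ) {ε : ℝ} (hε : 0 < ε) :
    ENNReal.ofReal (∫ y, ‖G y‖ ^ 2 * ((ε ^ n)⁻¹ * χ (ε⁻¹ • y)) ∂μ) =
      ∫⁻ y, ‖G y‖ₑ ^ 2 * ENNReal.ofReal ((ε ^ n)⁻¹ * χ (ε⁻¹ • y)) ∂μ := by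
  obtain ⟨χε, hχε⟩ : ∃ χε : 𝓢(E, ℝ), ∀ y, χε y = (ε ^ n)⁻¹ * χ (ε⁻¹ • y) :=
    ⟨(ε ^ n)⁻¹ • SchwartzMap.compCLMOfContinuousLinearEquiv ℝ
      (ContinuousLinearEquiv.smulLeft (Units.mk0 ε⁻¹ (inv_ne_zero hε.ne'))) χ, fun _ => rfl⟩
  have hint := hG.integrable_norm_sq_mul_schwartz hs χε
  simp only [hχε] at hint
  rw [ofReal_integral_eq_lintegral_ofReal hint (ae_of_all _ fun y => by positivity [hχ (ε⁻¹ • y)])]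
  refine lintegral_congr fun y => ?_
  rw [ENNReal.ofReal_mul (by positivity), ← ofReal_norm, ENNReal.ofReal_pow (norm_nonneg _)]

end

theorem pos_max_le_sqrt_max_general (d : ℕ) :
    ∃ C : ℝ≥0, ∀ p : ℝ≥0∞, 1 ≤ p → p ≤ 8 / 7 →
      ∀ f F : EuclideanSpace ℝ (Fin d) → ℂ,
        MemLp f p volume → MemLp F (1 - p⁻¹)⁻¹ volume →
        (∀ φ : 𝓢(EuclideanSpace ℝ (Fin d), ℂ), ∫ ξ, F ξ * φ ξ = ∫ x, f x * 𝓕 (⇑φ) x) →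
      ∀ χ : 𝓢(EuclideanSpace ℝ (Fin d), ℝ),
        (∀ y, 0 ≤ χ y) → (∀ y : EuclideanSpace ℝ (Fin d), ‖y‖ ≤ 1 → 1 ≤ χ y) →
      ∀ ω : sphere (0 : EuclideanSpace ℝ (Fin d)) 1,
        posMaxRestrict F ω ≤ C * maxRestrictSq χ F ω ^ (1 / 2 : ℝ) := by
  set K := volume (ball (0 : EuclideanSpace ℝ (Fin d)) 1)
  refine ⟨K.toNNReal ^ (1 / 2 : ℝ), fun p _ hp _ F _ hF _ χ hχ₀ hχ₁ ω => iSup₂_le fun ε hε => ?_⟩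
  have hs : 2 ≤ (1 - p⁻¹)⁻¹ :=
    ENNReal.two_le_inv_one_sub_inv (hp.trans (ENNReal.div_le_of_le_mul (by norm_num)))
  have hG : MemLp (fun y => F (ω + y)) (1 - p⁻¹)⁻¹ volume :=
    hF.comp_measurePreserving (measurePreserving_add_left volume (ω : EuclideanSpace ℝ (Fin d)))
  have hmain := setLIntegral_closedBall_div_le_sqrt_lintegral_sq_mul_rescale volume hχ₁ hε
    hG.aestronglyMeasurable.enorm
  rw [finrank_euclideanSpace_fin, ← ofReal_integral_norm_sq_mul_rescale hG hs hχ₀ d hε] at hmain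
  rw [ENNReal.coe_rpow_of_nonneg _ (by norm_num), ENNReal.coe_toNNReal measure_ball_lt_top.ne]
  refine hmain.trans ?_
  gcongr
  exact le_iSup₂_of_le ε hε (Real.ofReal_le_enorm _)

/-- **Pointwise domination of the positive maximal operator** (from the proof of
Proposition 6): for `d ≥ 3`, `1 ≤ p ≤ 8/7`, `f ∈ L^p(ℝ^d)` with Fourier transform `F = f̂`,
`h = f ∗ f̃` (so that `ĥ = |f̂|²`), and `χ` a nonnegative Schwartz function with `χ(y) ≥ 1`
for `|y| ≤ 1`, one has `𝓜⁺f(ω) ≤ C (𝓜h(ω))^{1/2}` for every `ω ∈ S^{d-1}`, with `C`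
depending only on `d`. -/
theorem pos_max_le_sqrt_max (d : ℕ) (hd : 3 ≤ d) :
    ∃ C : ℝ≥0, ∀ p : ℝ≥0∞, 1 ≤ p → p ≤ 8 / 7 →
      ∀ f F : EuclideanSpace ℝ (Fin d) → ℂ,
        MemLp f p volume → MemLp F (1 - p⁻¹)⁻¹ volume →
        (∀ φ : 𝓢(EuclideanSpace ℝ (Fin d), ℂ), ∫ ξ, F ξ * φ ξ = ∫ x, f x * 𝓕 (⇑φ) x) →
      ∀ χ : 𝓢(EuclideanSpace ℝ (Fin d), ℝ),
        (∀ y, 0 ≤ χ y) → (∀ y : EuclideanSpace ℝ (Fin d), ‖y‖ ≤ 1 → 1 ≤ χ y) →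
      ∀ ω : sphere (0 : EuclideanSpace ℝ (Fin d)) 1,
        posMaxRestrict F ω ≤ C * maxRestrictSq χ F ω ^ (1 / 2 : ℝ) :=
  pos_max_le_sqrt_max_general d
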